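/- arXiv:2507.03501 — 3 statements merged into one kernel-verified Lean document; each statement's English description precedes it below -/
import Mathlib

section
/- Let M be a smooth manifold and S = {W₁, …, W_r} a finite set of smooth vector fields on M. For each open Ω ⊆ M define F(Ω) to be the C^∞(Ω)-module generated by the restrictions W₁|_Ω, …, W_r|_Ω inside the vector fields on Ω. Then F (with the usual restriction maps) satisfies the sheaf gluing axiom: if {U_α} is a family of open sets with union U, and V_α ∈ F(U_α) agree on overlaps (V_α|_{U_α ∩ U_β} = V_β|_{U_α ∩ U_β} for all α, β), then the vector field V on U defined by V|_{U_α} = V_α lies in F(U). -/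
open scoped Manifold

/-- `V` belongs to the `C^∞(Ω)`-module of vector fields generated by `W₁, …, W_r` on the
open set `Ω`: there are functions `a j`, smooth on `Ω`, with `V = ∑ j, a j • W j` on `Ω`. -/
def InSpanOn {E : Type*} [NormedAddCommGroup E] [NormedSpace ℝ E]
    {H : Type*} [TopologicalSpace H] (I : ModelWithCorners ℝ E H)
    {M : Type*} [TopologicalSpace M] [ChartedSpace H M]
    {r : ℕ} (W : Fin r → (x : M) → TangentSpace I x)
    (Ω : Set M) (V : (x : M) → TangentSpace I x) : Prop :=
  ∃ a : Fin r → M → ℝ,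
    (∀ j, ContMDiffOn I (modelWithCornersSelf ℝ ℝ) (⊤ : ℕ∞) (a j) Ω) ∧
    ∀ x ∈ Ω, V x = ∑ j, a j x • W j x

/-!
On `S = ⋃ i, U i`, the admissible coefficient vectors at `x`, namely the `c : Fin r → ℝ` with
`V x = ∑ j, c j • W j x`, form an affine (hence convex) subset of `ℝ^r`, and each `U i` supplies
smooth admissible coefficients locally. A smooth partition of unity on the σ-compact manifold `S`
averages these local choices into global smooth admissible coefficients on `S`.
-/

theorem convex_setOf_eq_sum_smul {ι F : Type*} [Fintype ι] [AddCommGroup F] [Module ℝ F]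
    (w : ι → F) (v : F) : Convex ℝ {c : ι → ℝ | v = ∑ j, c j • w j} := by
  simpa [Set.preimage, Fintype.linearCombination_apply, eq_comm] using
    (convex_singleton v).linear_preimage (Fintype.linearCombination ℝ w)

theorem TopologicalSpace.Opens.sigmaCompactSpace_of_finiteDimensional
    {E : Type*} [NormedAddCommGroup E] [NormedSpace ℝ E] [FiniteDimensional ℝ E]
    {H : Type*} [TopologicalSpace H] (I : ModelWithCorners ℝ E H)
    {M : Type*} [TopologicalSpace M] [ChartedSpace H M] [SigmaCompactSpace M]
    (S : TopologicalSpace.Opens M) : SigmaCompactSpace S :=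
  have : LocallyCompactSpace M := Manifold.locallyCompact_of_finiteDimensional I
  have : SecondCountableTopology H := I.secondCountableTopology
  have : SecondCountableTopology M := ChartedSpace.secondCountable_of_sigmaCompact H M
  have : LocallyCompactSpace S := S.isOpen.locallyCompactSpace
  sigmaCompactSpace_of_locallyCompact_secondCountable

section OpenSubmanifold

variable {E : Type*} [NormedAddCommGroup E] [NormedSpace ℝ E]
  {H : Type*} [TopologicalSpace H] (I : ModelWithCorners ℝ E H)
  {M : Type*} [TopologicalSpace M] [ChartedSpace H M]
  {F : Type*} [NormedAddCommGroup F] [NormedSpace ℝ F]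

open Classical in
theorem ContMDiff.contMDiffOn_dite_zero {n : WithTop ℕ∞} {S : TopologicalSpace.Opens M}
    {g : S → F} (hg : ContMDiff I 𝓘(ℝ, F) n g) :
    ContMDiffOn I 𝓘(ℝ, F) n (fun x => if h : x ∈ S then g ⟨x, h⟩ else 0) S := by
  intro x hx
  refine ContMDiffAt.contMDiffWithinAt ?_
  rw [← contMDiffAt_subtype_iff (x := ⟨x, hx⟩)]
  simpa using hg.contMDiffAt

end OpenSubmanifold

section InSpanOn

variable {E : Type*} [NormedAddCommGroup E] [NormedSpace ℝ E]
  {H : Type*} [TopologicalSpace H] {I : ModelWithCorners ℝ E H}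
  {M : Type*} [TopologicalSpace M] [ChartedSpace H M]
  {r : ℕ} {W : Fin r → (x : M) → TangentSpace I x} {V : (x : M) → TangentSpace I x}

theorem inSpanOn_of_contMDiff_subtype {S : TopologicalSpace.Opens M} {g : S → Fin r → ℝ}
    (hg : ContMDiff I 𝓘(ℝ, Fin r → ℝ) (⊤ : ℕ∞) g) (hV : ∀ x : S, V x = ∑ j, g x j • W j x) :
    InSpanOn I W S V := by
  classical
  refine ⟨fun j x => if h : x ∈ S then g ⟨x, h⟩ j else 0, fun j => ?_, fun x hx => ?_⟩
  · exact (contMDiff_pi_space.1 hg j).contMDiffOn_dite_zero I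
  · simpa [dif_pos (show x ∈ S from hx)] using hV ⟨x, hx⟩

theorem InSpanOn.exists_contMDiffOn_subtype {Ω : Set M} (hV : InSpanOn I W Ω V)
    (S : TopologicalSpace.Opens M) :
    ∃ g : S → Fin r → ℝ, ContMDiffOn I 𝓘(ℝ, Fin r → ℝ) (⊤ : ℕ∞) g (Subtype.val ⁻¹' Ω) ∧
      ∀ x : S, x.1 ∈ Ω → V x = ∑ j, g x j • W j x := by
  obtain ⟨a, ha, haV⟩ := hV
  refine ⟨fun x j => a j x, ?_, fun x hx => haV x hx⟩
  rw [contMDiffOn_pi_space]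
  exact fun j => (ha j).comp contMDiff_subtype_val.contMDiffOn fun _ hy => hy

end InSpanOn

theorem stmt4_general {E : Type*} [NormedAddCommGroup E] [NormedSpace ℝ E]
    {H : Type*} [TopologicalSpace H] (I : ModelWithCorners ℝ E H)
    {M : Type*} [TopologicalSpace M] [ChartedSpace H M] [IsManifold I (⊤ : ℕ∞) M]
    [T2Space M] [SigmaCompactSpace M] [FiniteDimensional ℝ E]
    {r : ℕ} (W : Fin r → (x : M) → TangentSpace I x)
    {ι : Type*} (U : ι → Set M) (hU : ∀ i, IsOpen (U i))
    (V : (x : M) → TangentSpace I x)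
    (hV : ∀ i, InSpanOn I W (U i) V) :
    InSpanOn I W (⋃ i, U i) V := by
  let S : TopologicalSpace.Opens M := ⟨⋃ i, U i, isOpen_iUnion hU⟩
  have : SigmaCompactSpace S := S.sigmaCompactSpace_of_finiteDimensional I
  have hloc : ∀ x : S, ∃ u ∈ nhds x, ∃ g : S → Fin r → ℝ,
      ContMDiffOn I 𝓘(ℝ, Fin r → ℝ) (⊤ : ℕ∞) g u ∧
        ∀ y ∈ u, g y ∈ {c : Fin r → ℝ | V y = ∑ j, c j • W j y} := by
    intro x
    obtain ⟨i, hxi⟩ := Set.mem_iUnion.1 x.2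
    obtain ⟨g, hg, hgV⟩ := (hV i).exists_contMDiffOn_subtype S
    exact ⟨_, ((hU i).preimage continuous_subtype_val).mem_nhds hxi, g, hg, hgV⟩
  obtain ⟨g, hg⟩ := exists_contMDiffMap_forall_mem_convex_of_local I
    (fun x : S => convex_setOf_eq_sum_smul (fun j => W j x) (V x)) hloc
  exact inSpanOn_of_contMDiff_subtype g.contMDiff hg

/-- Let `M` be a smooth manifold (possibly with boundary) and
`W₁, …, W_r` smooth vector fields on `M`.  The presheaf `Ω ↦` (`C^∞(Ω)`-module generated
by the `Wⱼ`) satisfies the sheaf gluing axiom: if `V` restricted to each member `U i` of a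
family of open sets belongs to the module on `U i`, then `V` belongs to the module on
`⋃ i, U i`. -/
theorem stmt4 {E : Type*} [NormedAddCommGroup E] [NormedSpace ℝ E]
    {H : Type*} [TopologicalSpace H] (I : ModelWithCorners ℝ E H)
    {M : Type*} [TopologicalSpace M] [ChartedSpace H M] [IsManifold I (⊤ : ℕ∞) M]
    [T2Space M] [SigmaCompactSpace M] [FiniteDimensional ℝ E]
    {r : ℕ} (W : Fin r → (x : M) → TangentSpace I x)
    (hW : ∀ j, ContMDiff I I.tangent (⊤ : ℕ∞)
      (fun x => (⟨x, W j x⟩ : TangentBundle I M)))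
    {ι : Type*} (U : ι → Set M) (hU : ∀ i, IsOpen (U i))
    (V : (x : M) → TangentSpace I x)
    (hV : ∀ i, InSpanOn I W (U i) V) :
    InSpanOn I W (⋃ i, U i) V :=
  stmt4_general I W U hU V hV
end

section
/- Let F be a sheaf of C^∞-modules of smooth vector fields on a smooth manifold M, and suppose S ⊆ F(M) is a set of global vector fields such that F(M) equals the C^∞(M)-module generated by S. Then for every x ∈ M and every open U containing x and every X ∈ F(U), there is an open neighborhood V of x with V ⊆ U such that X|_V belongs to the C^∞(V)-module generated by the restrictions of elements of S to V. -/
/-! A bump function `φ`, equal to `1` near `x` and with `tsupport φ ⊆ U`, turns `X ∈ F(U)` into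
`φ • X`, which vanishes on the open set `(tsupport φ)ᶜ`; together with `U` this set covers `M`, so
gluing with the zero field shows `φ • X ∈ F(M)`. Hence `φ • X` is a finite `C^∞(M)`-combination of
elements of `S`, and near `x` it agrees with `X`. -/

open scoped Manifold

/-- `X` belongs, on `Ω`, to the `C^∞(Ω)`-module generated by the restrictions to `Ω` of
the elements of the set `S` of global vector fields: there are finitely many elements
`s j ∈ S` and functions `a j`, smooth on `Ω`, with `X = ∑ j, a j • s j` on `Ω`. -/
def GenByOn {E : Type*} [NormedAddCommGroup E] [NormedSpace ℝ E]
    {H : Type*} [TopologicalSpace H] (I : ModelWithCorners ℝ E H)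
    {M : Type*} [TopologicalSpace M] [ChartedSpace H M]
    (S : Set ((x : M) → TangentSpace I x))
    (Ω : Set M) (X : (x : M) → TangentSpace I x) : Prop :=
  ∃ (n : ℕ) (a : Fin n → M → ℝ) (s : Fin n → (x : M) → TangentSpace I x),
    (∀ j, ContMDiffOn I (modelWithCornersSelf ℝ ℝ) (⊤ : ℕ∞) (a j) Ω) ∧
    (∀ j, s j ∈ S) ∧
    ∀ x ∈ Ω, X x = ∑ j, a j x • s j x

open Set

section

variable {E : Type*} [NormedAddCommGroup E] [NormedSpace ℝ E]
  {H : Type*} [TopologicalSpace H] {I : ModelWithCorners ℝ E H}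
  {M : Type*} [TopologicalSpace M] [ChartedSpace H M]
  {F : Set M → Set ((x : M) → TangentSpace I x)}

theorem mem_union_of_mem_of_mem
    (hglue : ∀ {ι : Type} (U : ι → Set M), (∀ i, IsOpen (U i)) →
      ∀ X : (x : M) → TangentSpace I x, (∀ i, X ∈ F (U i)) → X ∈ F (⋃ i, U i))
    {U V : Set M} (hU : IsOpen U) (hV : IsOpen V) {X : (x : M) → TangentSpace I x}
    (hXU : X ∈ F U) (hXV : X ∈ F V) : X ∈ F (U ∪ V) := by
  rw [union_eq_iUnion]
  exact hglue _ (Bool.forall_bool.2 ⟨hV, hU⟩) X (Bool.forall_bool.2 ⟨hXV, hXU⟩)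

theorem smul_mem_univ_of_tsupport_subset
    (hloc : ∀ (Ω : Set M) (X Y : (x : M) → TangentSpace I x),
      (∀ x ∈ Ω, X x = Y x) → X ∈ F Ω → Y ∈ F Ω)
    (hsmul : ∀ (Ω : Set M) (φ : M → ℝ) (X : (x : M) → TangentSpace I x),
      ContMDiffOn I (modelWithCornersSelf ℝ ℝ) (⊤ : ℕ∞) φ Ω → X ∈ F Ω →
        (fun x => φ x • X x) ∈ F Ω)
    (hglue : ∀ {ι : Type} (U : ι → Set M), (∀ i, IsOpen (U i)) →
      ∀ X : (x : M) → TangentSpace I x, (∀ i, X ∈ F (U i)) → X ∈ F (⋃ i, U i))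
    (hzero : ∀ Ω, (0 : (x : M) → TangentSpace I x) ∈ F Ω)
    {U : Set M} (hU : IsOpen U) {φ : M → ℝ}
    (hφ : ContMDiff I (modelWithCornersSelf ℝ ℝ) (⊤ : ℕ∞) φ) (hφU : tsupport φ ⊆ U)
    {X : (x : M) → TangentSpace I x} (hX : X ∈ F U) :
    (fun x => φ x • X x) ∈ F univ := by
  have hcover : U ∪ (tsupport φ)ᶜ = univ :=
    eq_univ_of_forall fun y => (em (y ∈ tsupport φ)).imp (@hφU y) id
  have hvanish : (fun x => φ x • X x) ∈ F (tsupport φ)ᶜ :=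
    hloc _ 0 _ (fun y hy => by simp [image_eq_zero_of_notMem_tsupport hy]) (hzero _)
  rw [← hcover]
  exact mem_union_of_mem_of_mem hglue hU (isClosed_tsupport φ).isOpen_compl
    (hsmul U φ X hφ.contMDiffOn hX) hvanish

theorem GenByOn.congr_of_subset {S : Set ((x : M) → TangentSpace I x)} {Ω V : Set M}
    {X Y : (x : M) → TangentSpace I x}
    (hY : GenByOn I S Ω Y) (hV : V ⊆ Ω) (hXY : ∀ x ∈ V, X x = Y x) : GenByOn I S V X := by
  obtain ⟨n, a, s, ha, hs, hsum⟩ := hY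
  exact ⟨n, a, s, fun j => (ha j).mono hV, hs, fun x hx => (hXY x hx).trans (hsum x (hV hx))⟩

end

theorem stmt5_general {E : Type*} [NormedAddCommGroup E] [NormedSpace ℝ E]
    {H : Type*} [TopologicalSpace H] (I : ModelWithCorners ℝ E H)
    {M : Type*} [TopologicalSpace M] [ChartedSpace H M] [IsManifold I (⊤ : ℕ∞) M]
    [T2Space M] [FiniteDimensional ℝ E]
    (F : Set M → Set ((x : M) → TangentSpace I x))
    -- membership in `F Ω` depends only on the restriction to `Ω`:
    (hloc : ∀ (Ω : Set M) (X Y : (x : M) → TangentSpace I x),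
      (∀ x ∈ Ω, X x = Y x) → X ∈ F Ω → Y ∈ F Ω)
    -- `F Ω` is a module over functions smooth on `Ω`:
    (hsmul : ∀ (Ω : Set M) (φ : M → ℝ) (X : (x : M) → TangentSpace I x),
      ContMDiffOn I (modelWithCornersSelf ℝ ℝ) (⊤ : ℕ∞) φ Ω → X ∈ F Ω →
        (fun x => φ x • X x) ∈ F Ω)
    -- restriction:
    (hres : ∀ (Ω Ω' : Set M), Ω' ⊆ Ω → ∀ X ∈ F Ω, X ∈ F Ω')
    -- sheaf gluing axiom:
    (hglue : ∀ {ι : Type} (U : ι → Set M), (∀ i, IsOpen (U i)) →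
      ∀ X : (x : M) → TangentSpace I x, (∀ i, X ∈ F (U i)) → X ∈ F (⋃ i, U i))
    (S : Set ((x : M) → TangentSpace I x))
    -- `F(M)` is the `C^∞(M)`-module generated by `S`:
    (hgen : ∀ X, X ∈ F Set.univ ↔ GenByOn I S Set.univ X) :
    ∀ (x : M) (U : Set M), IsOpen U → x ∈ U → ∀ X ∈ F U,
      ∃ V : Set M, IsOpen V ∧ x ∈ V ∧ V ⊆ U ∧ GenByOn I S V X := by
  intro x U hU hxU X hX
  have hzero : ∀ Ω, (0 : (x : M) → TangentSpace I x) ∈ F Ω := fun Ω =>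
    hres univ Ω (subset_univ Ω) 0 <| (hgen 0).2
      ⟨0, Fin.elim0, Fin.elim0, Fin.rec0, Fin.rec0, fun y _ => by simp⟩
  obtain ⟨φ, -, hφU⟩ := (SmoothBumpFunction.nhds_basis_tsupport (I := I) x).mem_iff.1
    (hU.mem_nhds hxU)
  have hφX : GenByOn I S univ fun y => φ y • X y := (hgen _).1 <|
    smul_mem_univ_of_tsupport_subset hloc hsmul hglue hzero hU φ.contMDiff hφU hX
  obtain ⟨V, hφV, hV, hxV⟩ := eventually_nhds_iff.1 φ.eventuallyEq_one
  have hVU : V ⊆ U := fun y hy =>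
    hφU (subset_tsupport φ (by simp [Function.mem_support, hφV y hy]))
  exact ⟨V, hV, hxV, hVU, hφX.congr_of_subset (subset_univ V) fun y hy => by simp [hφV y hy]⟩

/-- Let `F` be a sheaf of `C^∞`-modules of smooth vector fields on a
smooth manifold `M` (membership `X ∈ F Ω` depends only on `X|_Ω`; `F Ω` is a module over
smooth functions, is closed under restriction to smaller open sets, and satisfies the
gluing axiom).  Suppose the set `S ⊆ F(M)` of global vector fields generates `F(M)` as a
`C^∞(M)`-module.  Then for every `x ∈ M`, every open `U ∋ x` and every `X ∈ F(U)`, there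
is an open neighborhood `V` of `x` with `V ⊆ U` such that `X|_V` belongs to the
`C^∞(V)`-module generated by the restrictions of elements of `S`. -/
theorem stmt5 {E : Type*} [NormedAddCommGroup E] [NormedSpace ℝ E]
    {H : Type*} [TopologicalSpace H] (I : ModelWithCorners ℝ E H)
    {M : Type*} [TopologicalSpace M] [ChartedSpace H M] [IsManifold I (⊤ : ℕ∞) M]
    [T2Space M] [SigmaCompactSpace M] [FiniteDimensional ℝ E]
    (F : Set M → Set ((x : M) → TangentSpace I x))
    -- membership in `F Ω` depends only on the restriction to `Ω`:
    (hloc : ∀ (Ω : Set M) (X Y : (x : M) → TangentSpace I x),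
      (∀ x ∈ Ω, X x = Y x) → X ∈ F Ω → Y ∈ F Ω)
    -- `F Ω` is a module over functions smooth on `Ω`:
    (hadd : ∀ (Ω : Set M) (X Y : (x : M) → TangentSpace I x),
      X ∈ F Ω → Y ∈ F Ω → (fun x => X x + Y x) ∈ F Ω)
    (hsmul : ∀ (Ω : Set M) (φ : M → ℝ) (X : (x : M) → TangentSpace I x),
      ContMDiffOn I (modelWithCornersSelf ℝ ℝ) (⊤ : ℕ∞) φ Ω → X ∈ F Ω →
        (fun x => φ x • X x) ∈ F Ω)
    -- restriction:
    (hres : ∀ (Ω Ω' : Set M), Ω' ⊆ Ω → ∀ X ∈ F Ω, X ∈ F Ω')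
    -- sheaf gluing axiom:
    (hglue : ∀ {ι : Type} (U : ι → Set M), (∀ i, IsOpen (U i)) →
      ∀ X : (x : M) → TangentSpace I x, (∀ i, X ∈ F (U i)) → X ∈ F (⋃ i, U i))
    (S : Set ((x : M) → TangentSpace I x))
    (hS : S ⊆ F Set.univ)
    -- `F(M)` is the `C^∞(M)`-module generated by `S`:
    (hgen : ∀ X, X ∈ F Set.univ ↔ GenByOn I S Set.univ X) :
    ∀ (x : M) (U : Set M), IsOpen U → x ∈ U → ∀ X ∈ F U,
      ∃ V : Set M, IsOpen V ∧ x ∈ V ∧ V ⊆ U ∧ GenByOn I S V X :=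
  stmt5_general I F hloc hsmul hres hglue S hgen
end

section
/- Let N be a smooth manifold with boundary, (W,d) Hörmander vector fields with formal degrees on N, and let the boundary list (V, d̂) = {(V₁,d̂₁),…,(V_q,d̂_q)} be constructed near a non-characteristic point x₀ ∈ ∂N by the procedure: enumerate brackets (Z,e) of degree ≤ m·max dⱼ as (Z₁,ẑ₁),…,(Z_q,ẑ_q); choose X₀ = W_{j₀} transverse to ∂N of minimal degree; set Xⱼ = Zⱼ − b̃ⱼX₀ where b̃ⱼ is a smooth extension of the unique function making Zⱼ − bⱼX₀ tangent to ∂N; and Vⱼ = Xⱼ|_{∂N}, d̂ⱼ = ẑⱼ. Then at every boundary point x' in the construction neighborhood, V₁(x'), …, V_q(x') span T_{x'}(∂N). -/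
/-- (In coordinates in which the boundary is the hyperplane
`{x : x i = 0}`, with tangent space `{v : v i = 0}` at each of its points.)
Near a non-characteristic point, the boundary vector fields are constructed by
`Xⱼ := Zⱼ − b̃ⱼ X₀` (with `X₀ = W_{j₀}` transverse to the boundary), so that each `Xⱼ`
is tangent to the boundary along it, while `X₀, X₁, …, X_q` span the tangent space of
the manifold at each boundary point of the construction neighborhood `Ω₂`.  Then at
every boundary point `x'` of `Ω₂`, the vectors `Vⱼ(x') = Xⱼ(x')` span the tangent space
of the boundary. -/
theorem stmt18 {n q : ℕ} (i : Fin n) (Ω₂ : Set (Fin n → ℝ))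
    (Z : Fin q → (Fin n → ℝ) → (Fin n → ℝ))
    (bt : Fin q → (Fin n → ℝ) → ℝ)
    (X₀ : (Fin n → ℝ) → (Fin n → ℝ))
    (X : Fin q → (Fin n → ℝ) → (Fin n → ℝ))
    -- the construction `Xⱼ = Zⱼ − b̃ⱼ X₀`:
    (hX : ∀ j x, X j x = Z j x - bt j x • X₀ x)
    -- at boundary points of `Ω₂`: `X₀, X₁, …, X_q` span the tangent space,
    (hspan : ∀ x' ∈ Ω₂, x' i = 0 →
      Submodule.span ℝ ({X₀ x'} ∪ Set.range fun j => X j x') = ⊤)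
    -- `X₀` is transverse to the boundary,
    (htrans : ∀ x' ∈ Ω₂, x' i = 0 → X₀ x' i ≠ 0)
    -- and each `Xⱼ` (`j ≥ 1`) is tangent to the boundary:
    (htang : ∀ x' ∈ Ω₂, x' i = 0 → ∀ j, X j x' i = 0) :
    -- conclusion: `V₁(x'), …, V_q(x')` span the tangent space of the boundary
    ∀ x' ∈ Ω₂, x' i = 0 →
      Submodule.span ℝ (Set.range fun j => X j x') =
        LinearMap.ker (LinearMap.proj i : (Fin n → ℝ) →ₗ[ℝ] ℝ) := by
  intro x' hΩ hb
  have hle : Submodule.span ℝ (Set.range fun j => X j x') ≤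
      LinearMap.ker (LinearMap.proj i : (Fin n → ℝ) →ₗ[ℝ] ℝ) := by
    rw [Submodule.span_le]
    rintro _ ⟨j, rfl⟩
    simpa using htang x' hΩ hb j
  refine le_antisymm hle ?_
  intro v hv
  have hvi : v i = 0 := hv
  have hvtop : v ∈ Submodule.span ℝ ({X₀ x'} ∪ Set.range fun j => X j x') := by
    rw [hspan x' hΩ hb]; trivial
  rw [Set.singleton_union, Submodule.mem_span_insert] at hvtop
  obtain ⟨c, z, hz, rfl⟩ := hvtop
  have hzi : z i = 0 := hle hz
  have : c * X₀ x' i = 0 := by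
    have := hvi
    simp [Pi.add_apply, Pi.smul_apply, hzi] at this
    simpa using this
  have hc : c = 0 := by
    rcases mul_eq_zero.mp this with h | h
    · exact h
    · exact absurd h (htrans x' hΩ hb)
  simpa [hc] using hz
end
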